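/- (Monotone coupling for conditioned PNG trajectory lines, Lemma 6.2.) Let t₁ < t₂ < t₃ be real numbers, let a₁, a₂, a₃ ∈ ℤ, and let h̃ be a fixed PNG trajectory line on [t₁, t₃] with h̃(t₁) < a₁ and h̃(t₃) < a₃. Let H be the set of PNG trajectory lines h on [t₁, t₃] with h(t₁) = a₁, h(t₃) = a₃ and h > h̃, and assume H is nonempty; let G be the set of PNG trajectory lines g on [t₁, t₃] with g(t₁) = a₁ and g(t₃) = a₃. Let h be a random element of H distributed with probability proportional to the weight w(h), and let g be a random element of G distributed with probability proportional to the weight w(g). Then P( h(t₂) ≥ a₂ ) ≥ P( g(t₂) ≥ a₂ ). -/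

import Mathlib

/-!
The weight of a line is a product over its jumps, and `|min a b - min a' b'| +
|max a b - max a' b'| ≤ |a - a'| + |b - b'|` makes it log-supermodular for the pointwise
lattice structure on `ℤ → ℤ`, on which the lines with prescribed endpoint values form a
sublattice. The events `{h(t₂) ≥ a₂}` and `{h > h̃}` are both increasing, so the FKG
inequality (four functions theorem on finite sets, then a limit over finite sets) gives
`P(A ∩ B) ≥ P(A) P(B)` for the unconditioned measure, i.e. `P(A | B) ≥ P(A)`.
-/

open MeasureTheory Filter Set

noncomputable section

/-- The parity jump condition for (the integer values of) a PNG trajectory line on `[t₁, t₃]`: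
at even integers in the interior the jump is upward or zero, at odd integers it is
downward or zero. -/
def PNGJump (t₁ t₃ : ℝ) (f : ℤ → ℤ) : Prop :=
  ∀ n : ℤ, t₁ < (n : ℝ) → (n : ℝ) < t₃ →
    (Even n → f (n - 1) ≤ f n) ∧ (Odd n → f n ≤ f (n - 1))

/-- A PNG trajectory line on `[t₁, t₃]`, encoded by its values `f k` at the integer points
(the line itself is `t ↦ f ⌊t⌋`); the values outside `[⌊t₁⌋, ⌊t₃⌋]` are normalized to be
constant. -/
def PNGLineOn (t₁ t₃ : ℝ) : Set (ℤ → ℤ) :=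
  {f | PNGJump t₁ t₃ f ∧ (∀ m : ℤ, m ≤ ⌊t₁⌋ → f m = f ⌊t₁⌋) ∧
    ∀ m : ℤ, ⌊t₃⌋ ≤ m → f m = f ⌊t₃⌋}

/-- Strict ordering `f > g` of PNG trajectory lines on `I`:
`limsup_{t→t₀} g(t) < liminf_{t→t₀} f(t)` for every `t₀ ∈ I`. -/
def PNGGt (I : Set ℝ) (f g : ℤ → ℤ) : Prop :=
  ∀ t₀ ∈ I,
    Filter.limsup (fun t : ℝ => (g ⌊t⌋ : ℝ)) (nhds t₀) <
      Filter.liminf (fun t : ℝ => (f ⌊t⌋ : ℝ)) (nhds t₀)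

/-- The weight `w(h) = ∏_{k=⌊t₁⌋+1}^{⌊t₃⌋} p(|h(k) − h(k−ε)|)`, `p(k) = √(1−q)·(√q)^k`. -/
def pngWeight (q t₁ t₃ : ℝ) (f : ℤ → ℤ) : ℝ :=
  ∏ k ∈ Finset.Icc (⌊t₁⌋ + 1) ⌊t₃⌋,
    (Real.sqrt (1 - q) * Real.sqrt q ^ (f k - f (k - 1)).natAbs)

/-- The probability of the event `E` for a random PNG trajectory line in `S` distributed
proportionally to its weight. -/
def pngProb (q t₁ t₃ : ℝ) (S E : Set (ℤ → ℤ)) : ℝ :=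
  (∑' f : ↥(S ∩ E), pngWeight q t₁ t₃ (f : ℤ → ℤ)) /
    ∑' f : ↥S, pngWeight q t₁ t₃ (f : ℤ → ℤ)

theorem tsum_indicator_mul_tsum_indicator_le {α : Type*} [DistribLattice α] {w : α → ℝ}
    (h0 : 0 ≤ w) (hw : Summable w) (hsm : ∀ a b, w a * w b ≤ w (a ⊓ b) * w (a ⊔ b))
    {A B : Set α} (hA : IsUpperSet A) (hB : IsUpperSet B) :
    (∑' x, A.indicator w x) * (∑' x, B.indicator w x) ≤
      (∑' x, w x) * ∑' x, (A ∩ B).indicator w x := by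
  classical
  have hind : ∀ S : Set α, 0 ≤ S.indicator w := fun S => indicator_nonneg fun x _ => h0 x
  have hfin : ∀ F : Finset α, (∑ x ∈ F, A.indicator w x) * (∑ x ∈ F, B.indicator w x) ≤
      (∑' x, w x) * ∑' x, (A ∩ B).indicator w x := by
    intro F
    refine (four_functions_theorem _ _ w _ (hind A) (hind B) h0 (hind _) (fun a b => ?_) F F).trans
      (mul_le_mul (hw.sum_le_tsum _ fun x _ => h0 x)
        ((hw.indicator _).sum_le_tsum _ fun x _ => hind _ x)
        (Finset.sum_nonneg fun x _ => hind _ x) (tsum_nonneg h0))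
    by_cases ha : a ∈ A
    · by_cases hb : b ∈ B
      · rw [indicator_of_mem ha, indicator_of_mem hb,
          indicator_of_mem (mem_inter (hA le_sup_left ha) (hB le_sup_right hb))]
        exact hsm a b
      · rw [indicator_of_notMem hb, mul_zero]
        exact mul_nonneg (h0 _) (hind _ _)
    · rw [indicator_of_notMem ha, zero_mul]
      exact mul_nonneg (h0 _) (hind _ _)
  exact le_of_tendsto' (Tendsto.mul (hw.indicator A).hasSum (hw.indicator B).hasSum) hfin

theorem tsum_indicator_div_le_of_isUpperSet {α : Type*} [DistribLattice α] {w : α → ℝ}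
    (h0 : 0 ≤ w) (hw : Summable w) (hsm : ∀ a b, w a * w b ≤ w (a ⊓ b) * w (a ⊔ b))
    {A B : Set α} (hA : IsUpperSet A) (hB : IsUpperSet B) (hB0 : 0 < ∑' x, B.indicator w x) :
    (∑' x, A.indicator w x) / ∑' x, w x ≤
      (∑' x, A.indicator (B.indicator w) x) / ∑' x, B.indicator w x := by
  have hw0 : 0 < ∑' x, w x :=
    hB0.trans_le (hw.indicator B |>.tsum_le_tsum (indicator_le_self' fun x _ => h0 x) hw)
  rw [indicator_indicator, div_le_div_iff₀ hw0 hB0]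
  exact (tsum_indicator_mul_tsum_indicator_le h0 hw hsm hA hB).trans_eq (mul_comm _ _)

theorem indicator_mul_indicator_le_of_isSublattice {α : Type*} [Lattice α] {s : Set α}
    (hs : IsSublattice s) {w : α → ℝ} (h0 : 0 ≤ w)
    (hsm : ∀ a ∈ s, ∀ b ∈ s, w a * w b ≤ w (a ⊓ b) * w (a ⊔ b)) (a b : α) :
    s.indicator w a * s.indicator w b ≤ s.indicator w (a ⊓ b) * s.indicator w (a ⊔ b) := by
  have hind : 0 ≤ s.indicator w := indicator_nonneg fun x _ => h0 x
  by_cases ha : a ∈ s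
  · by_cases hb : b ∈ s
    · rw [indicator_of_mem ha, indicator_of_mem hb, indicator_of_mem (hs.infClosed ha hb),
        indicator_of_mem (hs.supClosed ha hb)]
      exact hsm a ha b hb
    · rw [indicator_of_notMem hb, mul_zero]
      exact mul_nonneg (hind _) (hind _)
  · rw [indicator_of_notMem ha, zero_mul]
    exact mul_nonneg (hind _) (hind _)

theorem summable_prod_apply {ι κ : Type*} [Fintype ι] {φ : ι → κ → ℝ} (h0 : ∀ i, 0 ≤ φ i)
    (hs : ∀ i, Summable (φ i)) : Summable fun x : ι → κ => ∏ i, φ i (x i) := by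
  classical
  refine summable_of_sum_le (c := ∏ i, ∑' k, φ i k)
    (fun x => Finset.prod_nonneg fun i _ => h0 i _) fun s => ?_
  calc ∑ x ∈ s, ∏ i, φ i (x i)
      ≤ ∑ x ∈ Fintype.piFinset fun i => s.image (· i), ∏ i, φ i (x i) :=
        Finset.sum_le_sum_of_subset_of_nonneg
          (fun x hx => Fintype.mem_piFinset.2 fun i => Finset.mem_image_of_mem _ hx)
          fun x _ _ => Finset.prod_nonneg fun i _ => h0 i _
    _ = ∏ i, ∑ k ∈ s.image (· i), φ i k := (Finset.prod_univ_sum _ _).symm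
    _ ≤ ∏ i, ∑' k, φ i k :=
        Finset.prod_le_prod (fun i _ => Finset.sum_nonneg fun k _ => h0 i k)
          fun i _ => (hs i).sum_le_tsum _ fun k _ => h0 i k

theorem eventually_abs_intCast_comp_floor_le (g : ℤ → ℤ) (t₀ : ℝ) :
    ∀ᶠ t in nhds t₀, |(g ⌊t⌋ : ℝ)| ≤ ∑ k ∈ Finset.Icc (⌊t₀⌋ - 1) (⌊t₀⌋ + 1), |(g k : ℝ)| := by
  filter_upwards [Ioo_mem_nhds (sub_one_lt t₀) (lt_add_one t₀)] with t ht
  refine Finset.single_le_sum (f := fun k : ℤ => |(g k : ℝ)|) (fun k _ => abs_nonneg _) ?_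
  rw [Finset.mem_Icc, ← Int.floor_sub_one, ← Int.floor_add_one]
  exact ⟨Int.floor_mono ht.1.le, Int.floor_mono ht.2.le⟩

theorem isUpperSet_pngGt (I : Set ℝ) (g : ℤ → ℤ) : IsUpperSet {f | PNGGt I f g} := by
  intro f f' hle hf t₀ ht₀
  have hbdd := fun u : ℤ → ℤ => (eventually_abs_intCast_comp_floor_le u t₀).mono
    fun _ h => abs_le.1 h
  refine (hf t₀ ht₀).trans_le (liminf_le_liminf
    (Eventually.of_forall fun t => Int.cast_le.2 (hle ⌊t⌋))
    (isBoundedUnder_of_eventually_ge ((hbdd f).mono fun _ h => h.1))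
    (isCoboundedUnder_ge_of_eventually_le _ ((hbdd f').mono fun _ h => h.2)))

theorem isSublattice_pngLineOn (t₁ t₃ : ℝ) : IsSublattice (PNGLineOn t₁ t₃) := by
  refine ⟨fun f hf g hg => ⟨fun n h1 h3 => ?_, fun m hm => ?_, fun m hm => ?_⟩,
    fun f hf g hg => ⟨fun n h1 h3 => ?_, fun m hm => ?_, fun m hm => ?_⟩⟩
  · exact ⟨fun he => sup_le_sup ((hf.1 n h1 h3).1 he) ((hg.1 n h1 h3).1 he),
      fun ho => sup_le_sup ((hf.1 n h1 h3).2 ho) ((hg.1 n h1 h3).2 ho)⟩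
  · exact congr_arg₂ (· ⊔ ·) (hf.2.1 m hm) (hg.2.1 m hm)
  · exact congr_arg₂ (· ⊔ ·) (hf.2.2 m hm) (hg.2.2 m hm)
  · exact ⟨fun he => inf_le_inf ((hf.1 n h1 h3).1 he) ((hg.1 n h1 h3).1 he),
      fun ho => inf_le_inf ((hf.1 n h1 h3).2 ho) ((hg.1 n h1 h3).2 ho)⟩
  · exact congr_arg₂ (· ⊓ ·) (hf.2.1 m hm) (hg.2.1 m hm)
  · exact congr_arg₂ (· ⊓ ·) (hf.2.2 m hm) (hg.2.2 m hm)

theorem isSublattice_setOf_apply_eq {ι α : Type*} [Lattice α] (i : ι) (a : α) :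
    IsSublattice {f : ι → α | f i = a} :=
  ⟨fun f hf g hg => by simp_all, fun f hf g hg => by simp_all⟩

theorem PNGLineOn.eq_of_apply_floor_eq_of_jump_eq {t₁ t₃ : ℝ} {f g : ℤ → ℤ}
    (hf : f ∈ PNGLineOn t₁ t₃) (hg : g ∈ PNGLineOn t₁ t₃) (h₁ : f ⌊t₁⌋ = g ⌊t₁⌋)
    (hjump : ∀ k ∈ Finset.Icc (⌊t₁⌋ + 1) ⌊t₃⌋, f k - f (k - 1) = g k - g (k - 1)) : f = g := by
  funext k
  rcases le_total k ⌊t₁⌋ with hk | hk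
  · rw [hf.2.1 k hk, hg.2.1 k hk, h₁]
  induction k, hk using Int.leInduction with
  | base => exact h₁
  | succ n hn ih =>
    by_cases hn₃ : n + 1 ≤ ⌊t₃⌋
    · have := hjump (n + 1) (Finset.mem_Icc.2 ⟨by omega, hn₃⟩)
      rw [add_sub_cancel_right] at this
      omega
    · rw [hf.2.2 (n + 1) (by omega), hg.2.2 (n + 1) (by omega), ← hf.2.2 n (by omega),
        ← hg.2.2 n (by omega), ih]

variable {q : ℝ}

theorem pngWeight_pos (hq : q ∈ Ioo 0 1) (t₁ t₃ : ℝ) (f : ℤ → ℤ) : 0 < pngWeight q t₁ t₃ f :=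
  Finset.prod_pos fun _ _ =>
    mul_pos (Real.sqrt_pos.2 (sub_pos.2 hq.2)) (pow_pos (Real.sqrt_pos.2 hq.1) _)

theorem natAbs_min_sub_min_add_natAbs_max_sub_max_le (a b a' b' : ℤ) :
    (min a b - min a' b').natAbs + (max a b - max a' b').natAbs ≤
      (a - a').natAbs + (b - b').natAbs := by
  omega

theorem pngWeight_mul_le (hq : q ∈ Ioo 0 1) (t₁ t₃ : ℝ) (f g : ℤ → ℤ) :
    pngWeight q t₁ t₃ f * pngWeight q t₁ t₃ g ≤
      pngWeight q t₁ t₃ (f ⊓ g) * pngWeight q t₁ t₃ (f ⊔ g) := by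
  simp only [pngWeight, ← Finset.prod_mul_distrib]
  refine Finset.prod_le_prod (fun k _ => by positivity) fun k _ => ?_
  have hr : Real.sqrt q ≤ 1 := Real.sqrt_le_one.2 hq.2.le
  calc _ = Real.sqrt (1 - q) ^ 2 * Real.sqrt q ^
        ((f k - f (k - 1)).natAbs + (g k - g (k - 1)).natAbs) := by ring
    _ ≤ Real.sqrt (1 - q) ^ 2 * Real.sqrt q ^
        ((min (f k) (g k) - min (f (k - 1)) (g (k - 1))).natAbs +
          (max (f k) (g k) - max (f (k - 1)) (g (k - 1))).natAbs) :=
      mul_le_mul_of_nonneg_left (pow_le_pow_of_le_one (Real.sqrt_nonneg q) hr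
        (natAbs_min_sub_min_add_natAbs_max_sub_max_le _ _ _ _)) (by positivity)
    _ = _ := by simp only [Pi.inf_apply, Pi.sup_apply]; ring

theorem summable_pngWeight_jump (hq : q ∈ Ioo 0 1) :
    Summable fun j : ℤ => Real.sqrt (1 - q) * Real.sqrt q ^ j.natAbs := by
  have hgeo := (summable_geometric_of_lt_one (Real.sqrt_nonneg q)
    ((Real.sqrt_lt' one_pos).2 (by rw [one_pow]; exact hq.2))).mul_left (Real.sqrt (1 - q))
  exact Summable.of_nat_of_neg (by simpa using hgeo) (by simpa using hgeo)

theorem summable_indicator_pngWeight (hq : q ∈ Ioo 0 1) (t₁ t₃ : ℝ) (a : ℤ) :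
    Summable ({f | f ∈ PNGLineOn t₁ t₃ ∧ f ⌊t₁⌋ = a}.indicator (pngWeight q t₁ t₃)) := by
  set K := Finset.Icc (⌊t₁⌋ + 1) ⌊t₃⌋
  rw [← summable_subtype_iff_indicator]
  let jumps : {f | f ∈ PNGLineOn t₁ t₃ ∧ f ⌊t₁⌋ = a} → (K → ℤ) :=
    fun f k => f.1 k - f.1 (k - 1)
  have hjumps : Function.Injective jumps := fun f g h => Subtype.ext <|
    PNGLineOn.eq_of_apply_floor_eq_of_jump_eq f.2.1 g.2.1 (f.2.2.trans g.2.2.symm)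
      fun k hk => congr_fun h ⟨k, hk⟩
  refine ((summable_prod_apply (fun _ _ => by positivity)
    fun _ => summable_pngWeight_jump hq).comp_injective hjumps).congr fun f => ?_
  exact Finset.prod_coe_sort K
    fun k => Real.sqrt (1 - q) * Real.sqrt q ^ (f.1 k - f.1 (k - 1)).natAbs

theorem pngProb_eq (q t₁ t₃ : ℝ) (S E : Set (ℤ → ℤ)) :
    pngProb q t₁ t₃ S E = (∑' f, E.indicator (S.indicator (pngWeight q t₁ t₃)) f) /
      ∑' f, S.indicator (pngWeight q t₁ t₃) f := by
  rw [pngProb, tsum_subtype, tsum_subtype, indicator_indicator, inter_comm]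

theorem png_monotone_coupling_general (q : ℝ) (hq : q ∈ Set.Ioo (0 : ℝ) 1)
    (t₁ t₂ t₃ : ℝ)
    (a₁ a₂ a₃ : ℤ) (ht : ℤ → ℤ)
    (hne : {f | f ∈ PNGLineOn t₁ t₃ ∧ f ⌊t₁⌋ = a₁ ∧ f ⌊t₃⌋ = a₃ ∧
        PNGGt (Set.Icc t₁ t₃) f ht}.Nonempty) :
    pngProb q t₁ t₃
        {f | f ∈ PNGLineOn t₁ t₃ ∧ f ⌊t₁⌋ = a₁ ∧ f ⌊t₃⌋ = a₃}
        {f | a₂ ≤ f ⌊t₂⌋} ≤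
      pngProb q t₁ t₃
        {f | f ∈ PNGLineOn t₁ t₃ ∧ f ⌊t₁⌋ = a₁ ∧ f ⌊t₃⌋ = a₃ ∧ PNGGt (Set.Icc t₁ t₃) f ht}
        {f | a₂ ≤ f ⌊t₂⌋} := by
  set G := {f | f ∈ PNGLineOn t₁ t₃ ∧ f ⌊t₁⌋ = a₁ ∧ f ⌊t₃⌋ = a₃}
  set B := {f | PNGGt (Set.Icc t₁ t₃) f ht}
  set w := G.indicator (pngWeight q t₁ t₃)
  have hH : {f | f ∈ PNGLineOn t₁ t₃ ∧ f ⌊t₁⌋ = a₁ ∧ f ⌊t₃⌋ = a₃ ∧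
      PNGGt (Set.Icc t₁ t₃) f ht} = B ∩ G := by
    ext f
    exact ⟨fun ⟨hf, h₁, h₃, hgt⟩ => ⟨hgt, hf, h₁, h₃⟩, fun ⟨hgt, hf, h₁, h₃⟩ => ⟨hf, h₁, h₃, hgt⟩⟩
  have hG : IsSublattice G := (isSublattice_pngLineOn t₁ t₃).inter
    ((isSublattice_setOf_apply_eq _ a₁).inter (isSublattice_setOf_apply_eq _ a₃))
  have hw0 : 0 ≤ w := indicator_nonneg fun f _ => (pngWeight_pos hq t₁ t₃ f).le
  have hGsub : G ⊆ {f | f ∈ PNGLineOn t₁ t₃ ∧ f ⌊t₁⌋ = a₁} := fun f hf => ⟨hf.1, hf.2.1⟩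
  have hw : Summable w := (summable_indicator_pngWeight hq t₁ t₃ a₁).of_nonneg_of_le hw0
    (indicator_le_indicator_of_subset hGsub fun f => (pngWeight_pos hq t₁ t₃ f).le)
  obtain ⟨f₀, hf₀⟩ := hne
  rw [hH] at hf₀
  have hB0 : 0 < ∑' f, B.indicator w f := (hw.indicator B).tsum_pos
    (indicator_nonneg fun f _ => hw0 f) f₀
    (by simp only [w, indicator_of_mem hf₀.1, indicator_of_mem hf₀.2, pngWeight_pos hq])
  rw [hH, pngProb_eq, pngProb_eq, ← indicator_indicator]
  exact tsum_indicator_div_le_of_isUpperSet hw0 hw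
    (indicator_mul_indicator_le_of_isSublattice hG (fun f => (pngWeight_pos hq t₁ t₃ f).le)
      fun f _ g _ => pngWeight_mul_le hq t₁ t₃ f g)
    (fun f f' hle hf => hf.trans (hle ⌊t₂⌋)) (isUpperSet_pngGt _ ht) hB0

/-- Monotone coupling for conditioned PNG trajectory lines, Lemma 6.2. -/
theorem png_monotone_coupling (q : ℝ) (hq : q ∈ Set.Ioo (0 : ℝ) 1)
    (t₁ t₂ t₃ : ℝ) (h12 : t₁ < t₂) (h23 : t₂ < t₃)
    (a₁ a₂ a₃ : ℤ) (ht : ℤ → ℤ) (hht : ht ∈ PNGLineOn t₁ t₃)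
    (h1 : ht ⌊t₁⌋ < a₁) (h3 : ht ⌊t₃⌋ < a₃)
    (hne : {f | f ∈ PNGLineOn t₁ t₃ ∧ f ⌊t₁⌋ = a₁ ∧ f ⌊t₃⌋ = a₃ ∧
        PNGGt (Set.Icc t₁ t₃) f ht}.Nonempty) :
    pngProb q t₁ t₃
        {f | f ∈ PNGLineOn t₁ t₃ ∧ f ⌊t₁⌋ = a₁ ∧ f ⌊t₃⌋ = a₃}
        {f | a₂ ≤ f ⌊t₂⌋} ≤
      pngProb q t₁ t₃
        {f | f ∈ PNGLineOn t₁ t₃ ∧ f ⌊t₁⌋ = a₁ ∧ f ⌊t₃⌋ = a₃ ∧ PNGGt (Set.Icc t₁ t₃) f ht}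
        {f | a₂ ≤ f ⌊t₂⌋} :=
  png_monotone_coupling_general q hq t₁ t₂ t₃ a₁ a₂ a₃ ht hne

end
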